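/- Let x₀ = √(-2α²·ln(y/(2w))) and suppose x > x₀ > 0. Then -[2·ln(y/(2w)) + (1/α²)·(xβ/(β + y²/(4α²)))²] > 0 if and only if 0 < β < y²x₀/(4α²(x - x₀)); i.e., σ_f = -y/2 is a local minimum of the dual exactly when β < y²x₀/(4α²(x - x₀)), and a local maximum when β > y²x₀/(4α²(x - x₀)). -/

import Mathlib

/-! Near `σ₀ = -y/2`, where `G ≠ 0`, the dual equals
`-(x²β/2) · u/(α²β - u) + σ²/2 - u · log((σ + y)/w)` with `u = σ(σ + y)`, and its
derivative factors as `-(2σ + y) · E(σ)` with `E` smooth near `σ₀`. Hence `P'(σ₀) = 0` and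
`P''(σ₀) = -2E(σ₀) = (x₀² - t²)/α²` with `t = xβ/(β + y²/(4α²))`, so the second-derivative
test applies, and `t < x₀` is equivalent to `β < y²x₀/(4α²(x - x₀))`. -/

noncomputable def dualG (y α β σ : ℝ) : ℝ := β - (σ^2 + y * σ) / α^2

noncomputable def dualF (x y α σ : ℝ) : ℝ := -x * (σ^2 + y * σ) / α^2

noncomputable def dualPd (w x y α β σ : ℝ) : ℝ :=
  -(1/2) * (dualF x y α σ)^2 / (dualG y α β σ)
    - Real.log ((σ + y) / w) * (σ^2 + y * σ)
    + (1/2) * σ^2 - x^2 * (σ^2 + y * σ) / (2 * α^2)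

open Real Filter Topology

noncomputable def dualPdDeriv (w x y α β σ : ℝ) : ℝ :=
  -(2 * σ + y) * (x^2 * α^2 * β^2 / (2 * (α^2 * β - σ * (σ + y))^2) + log ((σ + y) / w))

theorem HasDerivAt.mul_of_eq_zero {𝕜 : Type*} [NontriviallyNormedField 𝕜] {f g : 𝕜 → 𝕜}
    {f' a : 𝕜} (hf : HasDerivAt f f' a) (hfa : f a = 0) (hg : DifferentiableAt 𝕜 g a) :
    HasDerivAt (fun x => f x * g x) (f' * g a) a := by
  simpa [hfa] using hf.fun_mul hg.hasDerivAt

theorem mul_div_add_lt_iff {x s β c : ℝ} (hβc : 0 < β + c) (hsx : s < x) :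
    x * β / (β + c) < s ↔ β < c * s / (x - s) := by
  rw [div_lt_iff₀ hβc, lt_div_iff₀ (sub_pos.mpr hsx)]
  constructor <;> intro h <;> linarith

theorem lt_mul_div_add_iff {x s β c : ℝ} (hβc : 0 < β + c) (hsx : s < x) :
    s < x * β / (β + c) ↔ c * s / (x - s) < β := by
  rw [lt_div_iff₀ hβc, div_lt_iff₀ (sub_pos.mpr hsx)]
  constructor <;> intro h <;> linarith

section

variable {w x y α β σ : ℝ}

theorem dualG_neg_half : dualG y α β (-y / 2) = β + y^2 / (4 * α^2) := by
  unfold dualG; ring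

theorem continuous_dualG : Continuous (dualG y α β) := by
  unfold dualG; fun_prop

theorem mul_dualG (hα : α ≠ 0) : α^2 * dualG y α β σ = α^2 * β - σ * (σ + y) := by
  unfold dualG; field_simp

theorem dualPd_eq_of_dualG_ne_zero (hα : α ≠ 0) (hG : dualG y α β σ ≠ 0) :
    dualPd w x y α β σ = -(x^2 * β / 2) * (σ * (σ + y) / (α^2 * β - σ * (σ + y)))
      + σ^2 / 2 - σ * (σ + y) * log ((σ + y) / w) := by
  rw [← mul_dualG hα]
  unfold dualPd dualF
  field_simp
  unfold dualG
  field_simp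
  ring

theorem hasDerivAt_dualPd (hα : α ≠ 0) (hw : w ≠ 0) (hσ : σ + y ≠ 0)
    (hG : dualG y α β σ ≠ 0) :
    HasDerivAt (dualPd w x y α β) (dualPdDeriv w x y α β σ) σ := by
  have hm : α^2 * β - σ * (σ + y) ≠ 0 := by
    rw [← mul_dualG hα]; exact mul_ne_zero (pow_ne_zero 2 hα) hG
  have hu : HasDerivAt (fun τ => τ * (τ + y)) (2 * σ + y) σ :=
    ((hasDerivAt_id' σ).fun_mul ((hasDerivAt_id' σ).add_const y)).congr_deriv (by ring)
  have hlog : HasDerivAt (fun τ => log ((τ + y) / w)) (1 / (σ + y)) σ := by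
    convert (((hasDerivAt_id' σ).add_const y).div_const w).log (div_ne_zero hσ hw) using 1
    field_simp
  have hclosed := ((((hu.fun_div ((hasDerivAt_const σ (α^2 * β)).sub hu) hm).const_mul
    (-(x^2 * β / 2))).add ((hasDerivAt_pow 2 σ).div_const 2)).sub (hu.fun_mul hlog))
  have hev : ∀ᶠ τ in 𝓝 σ, dualG y α β τ ≠ 0 :=
    continuous_dualG.continuousAt.eventually_ne hG
  refine (hclosed.congr_deriv ?_).congr_of_eventuallyEq
    (hev.mono fun τ hτ => dualPd_eq_of_dualG_ne_zero hα hτ)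
  simp only [Pi.sub_apply, dualPdDeriv]
  field_simp
  ring

theorem hasDerivAt_dualPdDeriv_neg_half (hw : w ≠ 0) (hy : y ≠ 0) (hα : α ≠ 0)
    (hG : dualG y α β (-y / 2) ≠ 0) :
    HasDerivAt (dualPdDeriv w x y α β)
      (-(2 * log (y / (2 * w)) + (1 / α^2) * (x * β / (β + y^2 / (4 * α^2)))^2)) (-y / 2) := by
  rw [dualG_neg_half] at hG
  have hm : α^2 * β - (-y / 2) * (-y / 2 + y) = α^2 * (β + y^2 / (4 * α^2)) := by
    field_simp; ring
  have hfactor : DifferentiableAt ℝ (fun σ => x^2 * α^2 * β^2 / (2 * (α^2 * β - σ * (σ + y))^2)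
      + log ((σ + y) / w)) (-y / 2) := by
    apply DifferentiableAt.add
    · exact (differentiableAt_const _).div (by fun_prop) (by rw [hm]; positivity)
    · exact ((differentiableAt_id.add_const y).div_const w).log
        (div_ne_zero (by contrapose! hy; simp at hy; linarith) hw)
  have hlin : HasDerivAt (fun σ => -(2 * σ + y)) (-2) (-y / 2) := by
    simpa using ((hasDerivAt_id' (-y / 2)).const_mul 2 |>.add_const y).fun_neg
  refine (hlin.mul_of_eq_zero (by ring) hfactor).congr_deriv ?_
  rw [show (-y / 2 + y) / w = y / (2 * w) by ring, hm]
  field_simp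
  ring

theorem deriv_dualPd_eventuallyEq (hw : w ≠ 0) (hy : y ≠ 0) (hα : α ≠ 0)
    (hG : dualG y α β (-y / 2) ≠ 0) :
    deriv (dualPd w x y α β) =ᶠ[𝓝 (-y / 2)] dualPdDeriv w x y α β := by
  have hσ : ∀ᶠ σ in 𝓝 (-y / 2), σ + y ≠ 0 :=
    (continuous_id.add continuous_const).continuousAt.eventually_ne
      (by contrapose! hy; simp at hy; linarith)
  filter_upwards [hσ, continuous_dualG.continuousAt.eventually_ne hG] with σ hσ hGσ
  exact (hasDerivAt_dualPd hα hw hσ hGσ).deriv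

end

theorem pseudo_point_classification_large_x_general
    (w x y α β : ℝ) (hw : 0 < w) (hy : 0 < y) (hα : α ≠ 0)
    (hxo : 0 < Real.sqrt (-2 * α^2 * Real.log (y / (2 * w))))
    (hx : Real.sqrt (-2 * α^2 * Real.log (y / (2 * w))) < x) (hβ : 0 < β) :
    (0 < -(2 * Real.log (y / (2 * w)) +
        (1 / α^2) * (x * β / (β + y^2 / (4 * α^2)))^2) ↔
      β < y^2 * Real.sqrt (-2 * α^2 * Real.log (y / (2 * w))) /
        (4 * α^2 * (x - Real.sqrt (-2 * α^2 * Real.log (y / (2 * w)))))) ∧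
    (β < y^2 * Real.sqrt (-2 * α^2 * Real.log (y / (2 * w))) /
        (4 * α^2 * (x - Real.sqrt (-2 * α^2 * Real.log (y / (2 * w))))) →
      IsLocalMin (fun σ => dualPd w x y α β σ) (-y / 2)) ∧
    (y^2 * Real.sqrt (-2 * α^2 * Real.log (y / (2 * w))) /
        (4 * α^2 * (x - Real.sqrt (-2 * α^2 * Real.log (y / (2 * w))))) < β →
      IsLocalMax (fun σ => dualPd w x y α β σ) (-y / 2)) := by
  have hG : dualG y α β (-y / 2) ≠ 0 := by rw [dualG_neg_half]; positivity
  have hD := hasDerivAt_dualPd (x := x) hα hw.ne' (by linarith) hG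
  have hD1 : deriv (dualPd w x y α β) (-y / 2) = 0 := hD.deriv.trans <| by
    rw [dualPdDeriv, show 2 * (-y / 2) + y = 0 by ring, neg_zero, zero_mul]
  have hD2 := (deriv_dualPd_eventuallyEq (x := x) hw.ne' hy.ne' hα hG).deriv_eq.trans
    (hasDerivAt_dualPdDeriv_neg_half hw.ne' hy.ne' hα hG).deriv
  set x₀ := Real.sqrt (-2 * α^2 * Real.log (y / (2 * w)))
  set c := y^2 / (4 * α^2)
  set t := x * β / (β + c)
  have hβc : 0 < β + c := by positivity
  have ht : 0 < t := div_pos (mul_pos (hxo.trans hx) hβ) hβc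
  have hK : -(2 * log (y / (2 * w)) + 1 / α^2 * t^2) = (x₀^2 - t^2) / α^2 := by
    rw [Real.sq_sqrt (Real.sqrt_pos.mp hxo).le]
    field_simp
    ring
  have hbound : y^2 * x₀ / (4 * α^2 * (x - x₀)) = c * x₀ / (x - x₀) := by
    rw [div_mul_eq_mul_div, div_div]
  have hmin_iff : 0 < -(2 * log (y / (2 * w)) + 1 / α^2 * t^2) ↔ β < c * x₀ / (x - x₀) := by
    rw [hK, div_pos_iff_of_pos_right (by positivity), sub_pos, sq_lt_sq₀ ht.le hxo.le,
      mul_div_add_lt_iff hβc hx]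
  have hmax_iff : -(2 * log (y / (2 * w)) + 1 / α^2 * t^2) < 0 ↔ c * x₀ / (x - x₀) < β := by
    rw [hK, div_lt_iff₀ (by positivity), zero_mul, sub_neg, sq_lt_sq₀ hxo.le ht.le,
      lt_mul_div_add_iff hβc hx]
  rw [hbound]
  refine ⟨hmin_iff, fun h => isLocalMin_of_deriv_deriv_pos ?_ hD1 hD.continuousAt,
    fun h => isLocalMax_of_deriv_deriv_neg ?_ hD1 hD.continuousAt⟩
  · exact hD2 ▸ hmin_iff.mpr h
  · exact hD2 ▸ hmax_iff.mpr h

/-- If x > x₀ = √(-2α²ln(y/(2w))) > 0 and β > 0, then (P^d)''(-y/2) > 0 iff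
β < y²x₀/(4α²(x - x₀)); σ_f = -y/2 is a local minimum of the dual exactly when
β < y²x₀/(4α²(x - x₀)) and a local maximum when β exceeds this bound. -/
theorem pseudo_point_classification_large_x
    (w x y α β : ℝ) (hw : 0 < w) (hy : 0 < y) (hyw : y < 2 * w) (hα : α ≠ 0)
    (hxo : 0 < Real.sqrt (-2 * α^2 * Real.log (y / (2 * w))))
    (hx : Real.sqrt (-2 * α^2 * Real.log (y / (2 * w))) < x) (hβ : 0 < β) :
    (0 < -(2 * Real.log (y / (2 * w)) +
        (1 / α^2) * (x * β / (β + y^2 / (4 * α^2)))^2) ↔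
      β < y^2 * Real.sqrt (-2 * α^2 * Real.log (y / (2 * w))) /
        (4 * α^2 * (x - Real.sqrt (-2 * α^2 * Real.log (y / (2 * w)))))) ∧
    (β < y^2 * Real.sqrt (-2 * α^2 * Real.log (y / (2 * w))) /
        (4 * α^2 * (x - Real.sqrt (-2 * α^2 * Real.log (y / (2 * w))))) →
      IsLocalMin (fun σ => dualPd w x y α β σ) (-y / 2)) ∧
    (y^2 * Real.sqrt (-2 * α^2 * Real.log (y / (2 * w))) /
        (4 * α^2 * (x - Real.sqrt (-2 * α^2 * Real.log (y / (2 * w))))) < β →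
      IsLocalMax (fun σ => dualPd w x y α β σ) (-y / 2)) :=
  pseudo_point_classification_large_x_general w x y α β hw hy hα hxo hx hβ
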